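/- Let ν ≥ 1, let D be a real diagonal ν×ν matrix, let A₀ be a real symmetric ν×ν matrix all of whose entries are nonnegative, and let M be a Hermitian ν×ν complex matrix with |M_{jk}| ≤ (A₀)_{jk} for all j,k ∈ {1,…,ν}. Then λ₁(D − A₀) ≤ λ_n(D − M) for every n ∈ {1,…,ν}. -/

import Mathlib

open Matrix

/-- The eigenvalues of a Hermitian matrix, listed in increasing order
(counted with multiplicity). -/
noncomputable def eigs {ν : ℕ} {A : Matrix (Fin ν) (Fin ν) ℂ} (hA : A.IsHermitian) :
    Fin ν → ℝ :=
  hA.eigenvalues ∘ ⇑(Tuple.sort hA.eigenvalues)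

lemma herm_of_real_symm {ν : ℕ} (A : Matrix (Fin ν) (Fin ν) ℝ) (hA : A.IsSymm) :
    (A.map fun x => (x : ℂ)).IsHermitian := by
  ext j k
  simp [Matrix.conjTranspose_apply, Matrix.map_apply, Complex.conj_ofReal, hA.apply]

lemma herm_diag_sub {ν : ℕ} (v : Fin ν → ℝ) {M : Matrix (Fin ν) (Fin ν) ℂ}
    (hM : M.IsHermitian) :
    ((Matrix.diagonal fun j => (v j : ℂ)) - M).IsHermitian :=
  (Matrix.isHermitian_diagonal_of_self_adjoint _
    (by funext n; exact Complex.conj_ofReal (v n))).sub hM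

lemma dot_self_normSq {ν : ℕ} (v : Fin ν → ℂ) :
    star v ⬝ᵥ v = (∑ i, Complex.normSq (v i) : ℝ) := by
  simp only [dotProduct, Pi.star_apply, Complex.star_def]
  push_cast
  congr 1; funext i
  rw [Complex.normSq_eq_conj_mul_self]

lemma rayleigh_ge {ν : ℕ} {B : Matrix (Fin ν) (Fin ν) ℂ} (hB : B.IsHermitian)
    (c : ℝ) (hc : ∀ i, c ≤ hB.eigenvalues i) (x : Fin ν → ℂ) :
    c * ∑ j, Complex.normSq (x j) ≤ (star x ⬝ᵥ B *ᵥ x).re := by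
  have hUU : (hB.eigenvectorUnitary : Matrix (Fin ν) (Fin ν) ℂ) *
      star (hB.eigenvectorUnitary : Matrix (Fin ν) (Fin ν) ℂ) = 1 :=
    (Matrix.mem_unitaryGroup_iff).mp hB.eigenvectorUnitary.2
  set U : Matrix (Fin ν) (Fin ν) ℂ := (hB.eigenvectorUnitary : Matrix (Fin ν) (Fin ν) ℂ) with hU
  set y : Fin ν → ℂ := star U *ᵥ x with hy
  have hsy : star y = star x ᵥ* U := by
    rw [hy, star_mulVec, ← Matrix.star_eq_conjTranspose, star_star]
  have key : star x ⬝ᵥ B *ᵥ x = ∑ i, (hB.eigenvalues i : ℂ) * Complex.normSq (y i) := by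
    conv_lhs => rw [hB.spectral_theorem, Unitary.conjStarAlgAut_apply]
    rw [← hU, ← mulVec_mulVec, ← mulVec_mulVec, dotProduct_mulVec (star x), ← hsy, ← hy]
    simp only [dotProduct, mulVec_diagonal, Function.comp_apply, Pi.star_apply,
      Complex.star_def, RCLike.ofReal_alg]
    congr 1; funext i
    push_cast
    rw [Complex.normSq_eq_conj_mul_self, Complex.real_smul, mul_one]
    ring
  have norm_eq : ∑ i, Complex.normSq (y i) = ∑ j, Complex.normSq (x j) := by
    have h1 : star y ⬝ᵥ y = star x ⬝ᵥ x := by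
      rw [hsy, hy, ← dotProduct_mulVec, mulVec_mulVec, hUU, one_mulVec]
    have := (dot_self_normSq y).symm.trans (h1.trans (dot_self_normSq x))
    exact_mod_cast this
  rw [key, ← norm_eq]
  push_cast
  rw [Complex.re_sum]
  simp only [Complex.mul_re, Complex.ofReal_re, Complex.ofReal_im, mul_zero, zero_mul, sub_zero]
  rw [Finset.mul_sum]
  exact Finset.sum_le_sum fun i _ => mul_le_mul_of_nonneg_right (hc i) (Complex.normSq_nonneg _)

lemma diag_re {ν : ℕ} (D : Fin ν → ℝ) (v : Fin ν → ℂ) :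
    (star v ⬝ᵥ (Matrix.diagonal fun j => (D j : ℂ)) *ᵥ v).re
      = ∑ j, D j * Complex.normSq (v j) := by
  simp only [dotProduct, mulVec_diagonal, Pi.star_apply, Complex.star_def, Complex.re_sum]
  congr 1; funext j
  rw [show (starRingEnd ℂ) (v j) * ((D j : ℂ) * v j)
      = (D j : ℂ) * ((starRingEnd ℂ) (v j) * v j) by ring,
    ← Complex.normSq_eq_conj_mul_self]
  simp [Complex.mul_re]

lemma offdiag_le {ν : ℕ} (A₀ : Matrix (Fin ν) (Fin ν) ℝ) (hA₀pos : ∀ j k, 0 ≤ A₀ j k)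
    (M : Matrix (Fin ν) (Fin ν) ℂ) (hle : ∀ j k, ‖M j k‖ ≤ A₀ j k)
    (x : Fin ν → ℂ) :
    (star x ⬝ᵥ M *ᵥ x).re ≤
      (star (fun j => (‖x j‖ : ℂ)) ⬝ᵥ (A₀.map fun r => (r : ℂ)) *ᵥ
        (fun j => (‖x j‖ : ℂ))).re := by
  have hrhs : (star (fun j => (‖x j‖ : ℂ)) ⬝ᵥ (A₀.map fun r => (r : ℂ)) *ᵥ
        (fun j => (‖x j‖ : ℂ))).re
      = ∑ j, ∑ k, ‖x j‖ * (A₀ j k * ‖x k‖) := by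
    simp only [dotProduct, mulVec, Matrix.map_apply, Pi.star_apply, Complex.star_def,
      Complex.conj_ofReal, Complex.re_sum, Finset.mul_sum]
    push_cast
    simp [Complex.re_sum]
  rw [hrhs]
  have hlhs : (star x ⬝ᵥ M *ᵥ x).re = ∑ j, ∑ k, ((starRingEnd ℂ) (x j) * (M j k * x k)).re := by
    simp only [dotProduct, mulVec, Pi.star_apply, Complex.star_def, Complex.re_sum,
      Finset.mul_sum]
  rw [hlhs]
  refine Finset.sum_le_sum fun j _ => Finset.sum_le_sum fun k _ => ?_
  calc ((starRingEnd ℂ) (x j) * (M j k * x k)).re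
      ≤ ‖(starRingEnd ℂ) (x j) * (M j k * x k)‖ := Complex.re_le_norm _
    _ = ‖x j‖ * (‖M j k‖ * ‖x k‖) := by
        simp [_root_.map_mul]
    _ ≤ ‖x j‖ * (A₀ j k * ‖x k‖) := by
        apply mul_le_mul_of_nonneg_left _ (norm_nonneg _)
        exact mul_le_mul_of_nonneg_right (hle j k) (norm_nonneg _)

lemma eigs_zero_le {ν : ℕ} (hν : 1 ≤ ν) {A : Matrix (Fin ν) (Fin ν) ℂ}
    (hA : A.IsHermitian) (i : Fin ν) :
    eigs hA ⟨0, Nat.lt_of_lt_of_le Nat.zero_lt_one hν⟩ ≤ hA.eigenvalues i := by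
  have h := Tuple.monotone_sort hA.eigenvalues
    (a := ⟨0, by omega⟩) (b := (Tuple.sort hA.eigenvalues)⁻¹ i) (by simp [Fin.le_def])
  simpa [eigs] using h

/-- if `A₀` is a real symmetric matrix with nonnegative entries, `D` is a
real diagonal matrix and `M` is Hermitian with `|Mⱼₖ| ≤ (A₀)ⱼₖ`, then
`λ₁(D − A₀) ≤ λₙ(D − M)` for every `n`. -/
theorem bottom_of_spectrum (ν : ℕ) (hν : 1 ≤ ν)
    (D : Fin ν → ℝ) (A₀ : Matrix (Fin ν) (Fin ν) ℝ)
    (hA₀symm : A₀.IsSymm) (hA₀pos : ∀ j k, 0 ≤ A₀ j k)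
    (M : Matrix (Fin ν) (Fin ν) ℂ) (hM : M.IsHermitian)
    (hle : ∀ j k, ‖M j k‖ ≤ A₀ j k) (n : Fin ν) :
    eigs (herm_diag_sub D (herm_of_real_symm A₀ hA₀symm)) ⟨0, by omega⟩ ≤
      eigs (herm_diag_sub D hM) n := by
  set B : Matrix (Fin ν) (Fin ν) ℂ := Matrix.diagonal (fun j => (D j : ℂ)) - M with hB
  set B₀ : Matrix (Fin ν) (Fin ν) ℂ :=
    Matrix.diagonal (fun j => (D j : ℂ)) - A₀.map (fun r => (r : ℂ)) with hB₀
  have hBh : B.IsHermitian := herm_diag_sub D hM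
  have hB₀h : B₀.IsHermitian := herm_diag_sub D (herm_of_real_symm A₀ hA₀symm)
  set i : Fin ν := Tuple.sort hBh.eigenvalues n with hi
  set x : Fin ν → ℂ := ⇑(hBh.eigenvectorBasis i) with hx
  set y : Fin ν → ℂ := fun j => (‖x j‖ : ℂ) with hy
  -- eigenvalue as Rayleigh quotient
  have h_eig : eigs hBh n = (star x ⬝ᵥ B *ᵥ x).re := hBh.eigenvalues_eq i
  -- unit norm
  have hxnorm : ∑ j, Complex.normSq (x j) = 1 := by
    have h1 : (inner ℂ (hBh.eigenvectorBasis i) (hBh.eigenvectorBasis i) : ℂ) = 1 := by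
      rw [inner_self_eq_norm_sq_to_K, hBh.eigenvectorBasis.orthonormal.1 i]
      norm_num
    rw [EuclideanSpace.inner_eq_star_dotProduct, dotProduct_comm] at h1
    have h2 := (dot_self_normSq x).symm.trans h1
    exact_mod_cast h2
  have hynorm : ∑ j, Complex.normSq (y j) = 1 := by
    rw [← hxnorm]
    congr 1; funext j
    simp [hy, Complex.normSq_ofReal, ← Complex.sq_norm, sq]
  -- comparison of quadratic forms
  have hcomp : (star y ⬝ᵥ B₀ *ᵥ y).re ≤ (star x ⬝ᵥ B *ᵥ x).re := by
    rw [hB, hB₀, sub_mulVec, dotProduct_sub, sub_mulVec, dotProduct_sub,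
      Complex.sub_re, Complex.sub_re]
    have hdiag : (star y ⬝ᵥ Matrix.diagonal (fun j => (D j : ℂ)) *ᵥ y).re
        = (star x ⬝ᵥ Matrix.diagonal (fun j => (D j : ℂ)) *ᵥ x).re := by
      rw [diag_re, diag_re]
      congr 1; funext j
      simp [hy, Complex.normSq_ofReal, ← Complex.sq_norm, sq]
    rw [hdiag]
    exact sub_le_sub_left (offdiag_le A₀ hA₀pos M hle x) _
  have hray := rayleigh_ge hB₀h (eigs hB₀h ⟨0, by omega⟩)
    (fun j => eigs_zero_le hν hB₀h j) y
  rw [hynorm, mul_one] at hray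
  calc eigs hB₀h ⟨0, by omega⟩ ≤ (star y ⬝ᵥ B₀ *ᵥ y).re := hray
    _ ≤ (star x ⬝ᵥ B *ᵥ x).re := hcomp
    _ = eigs hBh n := h_eig.symm
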